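/- Let (X, ≼, △) be a linearly ordered semigroup and k ∈ ℕ with k ≥ 1. On the set M^k(X) of finite multisets over X of cardinality at most k, define M₁ ▽^k M₂ = min^k(M₁ ⊎ M₂) and M₁ ▵^k M₂ = min^k({{x₁ △ x₂ | x₁ ∈ M₁, x₂ ∈ M₂}}). Then ▽^k and ▵^k are commutative and associative, and ▵^k distributes over ▽^k. -/

import Mathlib

/-! `Antitone p`, for `p : X → Prop`, says that `{x | p x}` is a lower set. A multiset over a
linear order is determined by how many of its elements lie in each lower set, and `minK k`
acts on these counts as `n ↦ min n k`; this turns `min^k (min^k M ⊎ N) = min^k (M ⊎ N)` into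
an identity about `min` on `ℕ`. For products, every element `d` of `S` outside `min^k S`
only contributes products `d △ y` lying above the `k` products `x △ y`, `x ∈ min^k S`, so
truncating `S` first does not change `min^k` of the product. The semiring laws then follow
from those of `⊎` and of the untruncated product multiset. -/

/-- The multiset of the `k` smallest elements of `M` (all of `M` if `|M| ≤ k`). -/
def minK {X : Type*} [LinearOrder X] (k : ℕ) (M : Multiset X) : Multiset X :=
  ((M.sort (· ≤ ·)).take k : List X)

/-- `M₁ ▽^k M₂ = min^k (M₁ ⊎ M₂)`. -/
def orK {X : Type*} [LinearOrder X] (k : ℕ) (M₁ M₂ : Multiset X) : Multiset X :=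
  minK k (M₁ + M₂)

/-- `M₁ ▵^k M₂ = min^k {{x₁ △ x₂ | x₁ ∈ M₁, x₂ ∈ M₂}}`. -/
def andK {X : Type*} [LinearOrder X] (op : X → X → X) (k : ℕ)
    (M₁ M₂ : Multiset X) : Multiset X :=
  minK k (M₁.bind fun x₁ => M₂.map (op x₁))

namespace List

variable {X : Type*} [LinearOrder X]

theorem countP_take_of_pairwise {p : X → Prop} [DecidablePred p] (hp : Antitone p) :
    ∀ {l : List X}, l.Pairwise (· ≤ ·) → ∀ k, (l.take k).countP p = min (l.countP p) k
  | [], _, k => by simp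
  | _ :: _, _, 0 => by simp
  | a :: l, hl, k + 1 => by
    have ih := countP_take_of_pairwise hp hl.of_cons k
    by_cases ha : p a
    · simp [ha, ih]
    · have hl0 : l.countP p = 0 := countP_eq_zero.mpr fun x hx hpx =>
        ha (hp (rel_of_pairwise_cons hl hx) (by simpa using hpx))
      simp [ha, ih, hl0]

end List

namespace Multiset

variable {α β : Type*}

theorem countP_mono_left {s : Multiset α} {p q : α → Prop} [DecidablePred p] [DecidablePred q]
    (h : ∀ x ∈ s, p x → q x) : s.countP p ≤ s.countP q := by
  induction s using Quot.inductionOn with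
  | h l => simpa using List.countP_mono_left (by simpa using h)

theorem map_le_bind {s : Multiset α} {f : α → Multiset β} {g : α → β}
    (h : ∀ x ∈ s, g x ∈ f x) : s.map g ≤ s.bind f := by
  induction s using Multiset.induction with
  | empty => simp
  | cons a s ih =>
    rw [map_cons, cons_bind, ← singleton_add]
    exact add_le_add (singleton_le.mpr (h a (mem_cons_self a s)))
      (ih fun x hx => h x (mem_cons_of_mem hx))

variable {X : Type*} [LinearOrder X]

theorem countP_le_eq_countP_lt_add_count (M : Multiset X) (x : X) :
    M.countP (· ≤ x) = M.countP (· < x) + M.count x := by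
  induction M using Multiset.induction with
  | empty => simp
  | cons a M ih =>
    rcases lt_trichotomy a x with h | rfl | h
    · simp [h.le, h, h.ne', ih]; omega
    · simp [ih]; omega
    · simp [not_le.mpr h, not_lt.mpr h.le, h.ne, ih]

theorem eq_of_forall_antitone_countP_eq {A B : Multiset X}
    (h : ∀ (p : X → Prop) [DecidablePred p], Antitone p → A.countP p = B.countP p) :
    A = B := by
  ext x
  have hle := h (· ≤ x) fun _ _ hab hb => hab.trans hb
  have hlt := h (· < x) fun _ _ hab hb => hab.trans_lt hb
  rw [countP_le_eq_countP_lt_add_count, countP_le_eq_countP_lt_add_count] at hle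
  omega

end Multiset

section LinearOrder

variable {X : Type*} [LinearOrder X]

theorem countP_minK {p : X → Prop} [DecidablePred p] (hp : Antitone p) (k : ℕ)
    (M : Multiset X) : (minK k M).countP p = min (M.countP p) k := by
  conv_rhs => rw [← Multiset.sort_eq M (· ≤ ·)]
  exact List.countP_take_of_pairwise hp (Multiset.pairwise_sort M _) k

theorem minK_minK_add (k : ℕ) (M N : Multiset X) :
    minK k (minK k M + N) = minK k (M + N) :=
  Multiset.eq_of_forall_antitone_countP_eq fun p _ hp => by
    simp only [countP_minK hp, Multiset.countP_add]
    omega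

theorem minK_add_minK (k : ℕ) (M N : Multiset X) :
    minK k (M + minK k N) = minK k (M + N) := by
  rw [add_comm M, add_comm M, minK_minK_add]

theorem minK_add_of_le_countP {k : ℕ} {A B : Multiset X}
    (h : ∀ b ∈ B, k ≤ A.countP (· ≤ b)) : minK k (A + B) = minK k A :=
  Multiset.eq_of_forall_antitone_countP_eq fun p _ hp => by
    simp only [countP_minK hp, Multiset.countP_add]
    rcases Nat.eq_zero_or_pos (B.countP p) with hB | hB
    · omega
    · obtain ⟨b, hb, hpb⟩ := Multiset.countP_pos.mp hB
      have : k ≤ A.countP p :=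
        (h b hb).trans <| Multiset.countP_mono_left fun x _ hxb => hp hxb hpb
      omega

theorem exists_minK_add_eq (k : ℕ) (S : Multiset X) :
    ∃ R, minK k S + R = S ∧
      ∀ d ∈ R, Multiset.card (minK k S) = k ∧ ∀ x ∈ minK k S, x ≤ d := by
  have hsorted := Multiset.pairwise_sort S (· ≤ ·)
  rw [← List.take_append_drop k (S.sort (· ≤ ·)), List.pairwise_append] at hsorted
  refine ⟨(S.sort (· ≤ ·)).drop k, ?_, fun d hd => ⟨?_, fun x hx => hsorted.2.2 x hx d hd⟩⟩
  · rw [minK, Multiset.coe_add, List.take_append_drop, Multiset.sort_eq]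
  · have : k ≤ (S.sort (· ≤ ·)).length := by
      by_contra! hk
      simp [List.drop_eq_nil_of_le hk.le] at hd
    simpa [minK] using this

end LinearOrder

section Product

variable {X Y Z : Type*} [LinearOrder X] [LinearOrder Z]

theorem minK_bind_map_minK_left (k : ℕ) (S : Multiset X) (M : Multiset Y) {F : X → Y → Z}
    (hF : ∀ y, Monotone (F · y)) :
    minK k ((minK k S).bind fun x => M.map (F x)) = minK k (S.bind fun x => M.map (F x)) := by
  obtain ⟨R, hSR, hR⟩ := exists_minK_add_eq k S
  conv_rhs => rw [← hSR, Multiset.add_bind]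
  refine (minK_add_of_le_countP fun z hz => ?_).symm
  obtain ⟨d, hd, y, hy, rfl⟩ : ∃ d ∈ R, ∃ y ∈ M, F d y = z := by simpa using hz
  obtain ⟨hcard, hle⟩ := hR d hd
  calc k = ((minK k S).map (F · y)).countP (· ≤ F d y) := by
        rw [Multiset.countP_eq_card.mpr, Multiset.card_map, hcard]
        simpa using fun x hx => hF y (hle x hx)
    _ ≤ ((minK k S).bind fun x => M.map (F x)).countP (· ≤ F d y) :=
        Multiset.countP_le_of_le _ <| Multiset.map_le_bind fun x _ => Multiset.mem_map_of_mem _ hy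

theorem minK_bind_map_minK_right (k : ℕ) (S : Multiset Y) (M : Multiset X) {F : Y → X → Z}
    (hF : ∀ y, Monotone (F y)) :
    minK k (S.bind fun y => (minK k M).map (F y)) = minK k (S.bind fun y => M.map (F y)) := by
  rw [Multiset.bind_map_comm, Multiset.bind_map_comm S M]
  exact minK_bind_map_minK_left k M S hF

end Product

theorem topk_semiring_general {X : Type*} [LinearOrder X] (op : X → X → X)
    (hcomm : ∀ x y, op x y = op y x)
    (hassoc : ∀ x y z, op (op x y) z = op x (op y z))
    (hmono : ∀ x y z, x ≤ y → op x z ≤ op y z)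
    (k : ℕ)
    (M₁ M₂ M₃ : Multiset X) :
    (orK k M₁ M₂ = orK k M₂ M₁) ∧
    (orK k (orK k M₁ M₂) M₃ = orK k M₁ (orK k M₂ M₃)) ∧
    (andK op k M₁ M₂ = andK op k M₂ M₁) ∧
    (andK op k (andK op k M₁ M₂) M₃ = andK op k M₁ (andK op k M₂ M₃)) ∧
    (andK op k M₁ (orK k M₂ M₃) = orK k (andK op k M₁ M₂) (andK op k M₁ M₃)) := by
  have hmono_left : ∀ z, Monotone (op · z) := fun z x y hxy => hmono x y z hxy
  have hmono_right : ∀ x, Monotone (op x) := fun x y z hyz => by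
    simpa only [hcomm x] using hmono y z x hyz
  have hbind_comm : ∀ A B : Multiset X,
      (A.bind fun x => B.map (op x)) = B.bind fun y => A.map (op y) := fun A B => by
    simp only [Multiset.bind_map_comm A B, hcomm]
  have hbind_assoc : ((M₁.bind fun x => M₂.map (op x)).bind fun s => M₃.map (op s))
      = M₁.bind fun x => (M₂.bind fun y => M₃.map (op y)).map (op x) := by
    simp only [Multiset.bind_assoc, Multiset.bind_map, Multiset.map_bind, Multiset.map_map,
      Function.comp_def, hassoc]
  refine ⟨by rw [orK, add_comm]; rfl, ?_, by rw [andK, hbind_comm]; rfl, ?_, ?_⟩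
  · simp only [orK, minK_minK_add, minK_add_minK, add_assoc]
  · simp only [andK, minK_bind_map_minK_left _ _ _ hmono_left,
      minK_bind_map_minK_right _ _ _ hmono_right, hbind_assoc]
  · simp only [andK, orK, minK_bind_map_minK_right _ _ _ hmono_right, minK_minK_add,
      minK_add_minK, Multiset.map_add, Multiset.bind_add]

/-- On multisets of cardinality at most `k` (`k ≥ 1`) over a
linearly ordered semigroup, `▽^k` and `▵^k` are commutative and associative
and `▵^k` distributes over `▽^k`. -/
theorem topk_semiring {X : Type*} [LinearOrder X] (op : X → X → X)
    (hcomm : ∀ x y, op x y = op y x)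
    (hassoc : ∀ x y z, op (op x y) z = op x (op y z))
    (hmono : ∀ x y z, x ≤ y → op x z ≤ op y z)
    (k : ℕ) (hk : 1 ≤ k)
    (M₁ M₂ M₃ : Multiset X)
    (h₁ : Multiset.card M₁ ≤ k) (h₂ : Multiset.card M₂ ≤ k)
    (h₃ : Multiset.card M₃ ≤ k) :
    (orK k M₁ M₂ = orK k M₂ M₁) ∧
    (orK k (orK k M₁ M₂) M₃ = orK k M₁ (orK k M₂ M₃)) ∧
    (andK op k M₁ M₂ = andK op k M₂ M₁) ∧
    (andK op k (andK op k M₁ M₂) M₃ = andK op k M₁ (andK op k M₂ M₃)) ∧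
    (andK op k M₁ (orK k M₂ M₃) = orK k (andK op k M₁ M₂) (andK op k M₁ M₃)) :=
  topk_semiring_general op hcomm hassoc hmono k M₁ M₂ M₃
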